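/- arXiv:2601.02332 — 2 statements merged into one kernel-verified Lean document; each statement's English description precedes it below -/
import Mathlib

section
/- Let V ⊆ F_2^m be a doubly even binary code spanned by v_1, v_2, v_3 with |v_1 ∩ v_2 ∩ v_3| odd, |v_i| ≡ 4 (mod 8) and |v_i ∩ v_j| ≡ 0 (mod 4) for all i ≠ j. Then v_i ∩ v_j ≠ ∅ for i ≠ j, and hence |v_i ∩ v_j| = 4 forces v_i ⊆ v_j or |v_i ∩ v_j| ≥ 4; in particular |v_i| ≥ 12 for each i. -/
lemma aux_ge_twelve {m : ℕ} (a b c : Finset (Fin m))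
    (htriple : Odd (a ∩ b ∩ c).card)
    (hwt : a.card % 8 = 4)
    (hab : (a ∩ b).card % 4 = 0) (hac : (a ∩ c).card % 4 = 0) :
    12 ≤ a.card := by
  by_contra h
  push_neg at h
  have ha4 : a.card = 4 := by omega
  -- a ∩ b is nonempty since the triple intersection has odd card
  have hne : (a ∩ b ∩ c).card ≠ 0 := by
    rcases htriple with ⟨k, hk⟩; omega
  have habne : (a ∩ b).card ≠ 0 := by
    intro h0
    exact hne (Nat.le_antisymm (le_trans (Finset.card_le_card
      (Finset.inter_subset_left)) (le_of_eq h0)) (Nat.zero_le _))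
  have hle : (a ∩ b).card ≤ 4 := ha4 ▸ Finset.card_le_card Finset.inter_subset_left
  have hab4 : (a ∩ b).card = 4 := by omega
  have haba : a ∩ b = a :=
    Finset.eq_of_subset_of_card_le Finset.inter_subset_left (by omega)
  rw [haba] at htriple
  rcases htriple with ⟨k, hk⟩
  omega

/-- If `|v₁ ∩ v₂ ∩ v₃|` is odd, each `|v i| ≡ 4 (mod 8)` and each pairwise
intersection size is `≡ 0 (mod 4)`, then all pairwise intersections are nonempty
and each `|v i| ≥ 12`. -/
theorem V5_generators_weight_ge_twelve {m : ℕ} (v : Fin 3 → Finset (Fin m))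
    (htriple : Odd (v 0 ∩ v 1 ∩ v 2).card)
    (hwt : ∀ i, (v i).card % 8 = 4)
    (hpair : ∀ i j, i ≠ j → (v i ∩ v j).card % 4 = 0) :
    (∀ i j, i ≠ j → (v i ∩ v j).Nonempty) ∧ ∀ i, 12 ≤ (v i).card := by
  have hne : (v 0 ∩ v 1 ∩ v 2).Nonempty := by
    rw [← Finset.card_pos]
    rcases htriple with ⟨k, hk⟩; omega
  obtain ⟨x, hx⟩ := hne
  simp only [Finset.mem_inter] at hx
  have hxm : ∀ i, x ∈ v i := by
    intro i; fin_cases i <;> tauto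
  constructor
  · intro i j _
    exact ⟨x, Finset.mem_inter.mpr ⟨hxm i, hxm j⟩⟩
  · intro i
    fin_cases i
    · exact aux_ge_twelve _ _ _ htriple (hwt 0)
        (hpair 0 1 (by decide)) (hpair 0 2 (by decide))
    · refine aux_ge_twelve (v 1) (v 0) (v 2) ?_ (hwt 1)
        (hpair 1 0 (by decide)) (hpair 1 2 (by decide))
      rwa [Finset.inter_comm (v 1) (v 0)]
    · refine aux_ge_twelve (v 2) (v 0) (v 1) ?_ (hwt 2)
        (hpair 2 0 (by decide)) (hpair 2 1 (by decide))
      rw [show v 2 ∩ v 0 ∩ v 1 = v 0 ∩ v 1 ∩ v 2 from by ext y; simp only [Finset.mem_inter]; tauto]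
      exact htriple
end

section
/- The F_2-span of v_1 = {1,...,8}, v_2 = {1,2,3,4,9,10,11,12}, v_3 = {1,2,3,5,9,13,14,15}, v_4 = {1,...,16} in F_2^{16} is a doubly even binary code, and its generators satisfy |v_i| = 8 for i = 1,2,3, |v_4| = 16, |v_i ∩ v_j| = 4 for 1 ≤ i < j ≤ 3, |v_i ∩ v_4| = 8 for i ≤ 3, and |v_1∩v_2∩v_3| = 3 (odd). -/
/-- Support `{1,...,8}` (0-indexed). -/
def V7s1 : Finset (Fin 16) := {0, 1, 2, 3, 4, 5, 6, 7}
/-- Support `{1,2,3,4,9,10,11,12}` (0-indexed). -/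
def V7s2 : Finset (Fin 16) := {0, 1, 2, 3, 8, 9, 10, 11}
/-- Support `{1,2,3,5,9,13,14,15}` (0-indexed). -/
def V7s3 : Finset (Fin 16) := {0, 1, 2, 4, 8, 12, 13, 14}
/-- Support `{1,...,16}` (0-indexed). -/
def V7s4 : Finset (Fin 16) := Finset.univ

lemma V7_combo_div (x y z w : ZMod 2) :
    4 ∣ (Finset.univ.filter fun i : Fin 16 =>
      (x • (fun i => if i ∈ V7s1 then (1 : ZMod 2) else 0)
       + y • (fun i => if i ∈ V7s2 then (1 : ZMod 2) else 0)
       + z • (fun i => if i ∈ V7s3 then (1 : ZMod 2) else 0)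
       + w • (fun i => if i ∈ V7s4 then (1 : ZMod 2) else 0)) i ≠ 0).card := by
  revert x y z w; decide

/-- The span of the four generators of `V₇` is doubly even, and the generators have
the stated weights and intersection sizes. -/
theorem V7_doubly_even_and_weights :
    (∀ u ∈ Submodule.span (ZMod 2)
      ({(fun i => if i ∈ V7s1 then 1 else 0),
        (fun i => if i ∈ V7s2 then 1 else 0),
        (fun i => if i ∈ V7s3 then 1 else 0),
        (fun i => if i ∈ V7s4 then 1 else 0)} : Set (Fin 16 → ZMod 2)),
      4 ∣ (Finset.univ.filter fun i => u i ≠ 0).card) ∧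
    (V7s1.card = 8 ∧ V7s2.card = 8 ∧ V7s3.card = 8 ∧ V7s4.card = 16) ∧
    ((V7s1 ∩ V7s2).card = 4 ∧ (V7s1 ∩ V7s3).card = 4 ∧ (V7s2 ∩ V7s3).card = 4) ∧
    ((V7s1 ∩ V7s4).card = 8 ∧ (V7s2 ∩ V7s4).card = 8 ∧ (V7s3 ∩ V7s4).card = 8) ∧
    (V7s1 ∩ V7s2 ∩ V7s3).card = 3 ∧ Odd (V7s1 ∩ V7s2 ∩ V7s3).card := by
  refine ⟨?_, by decide, by decide, by decide, by decide, by decide⟩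
  intro u hu
  simp only [Submodule.mem_span_insert, Submodule.mem_span_singleton] at hu
  obtain ⟨x, _, ⟨y, _, ⟨z, _, ⟨w, rfl⟩, rfl⟩, rfl⟩, rfl⟩ := hu
  simpa [add_assoc] using V7_combo_div x y z w
end
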